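/- Let 𝓜 be the set of 21 lines of PG(5,3) consisting of the six lines m₁,…,m₆ together with the fifteen lines represented by [[1,0,2,2,2,2],[0,1,0,2,0,2]], [[1,0,0,0,0,1],[0,1,0,0,2,1]], [[1,0,1,0,2,2],[0,1,0,1,0,2]], [[0,0,1,0,1,2],[0,0,0,1,1,0]], [[1,0,0,2,1,0],[0,1,1,1,0,1]], [[0,0,1,0,1,1],[0,0,0,1,2,0]], [[1,0,2,0,0,0],[0,1,2,2,0,0]], [[1,0,1,2,0,0],[0,1,1,0,0,0]], [[1,0,1,0,0,0],[0,1,0,1,0,0]], [[1,0,2,0,2,0],[0,1,2,2,2,2]], [[1,0,0,0,1,0],[0,1,0,0,0,1]], [[0,0,1,0,1,0],[0,0,0,1,0,1]], [[1,0,0,0,2,2],[0,1,0,0,0,2]], [[1,0,2,0,1,0],[0,1,2,2,0,1]], [[1,0,1,0,1,1],[0,1,0,1,2,0]]. Then 𝓜 has exactly 21 elements, its elements are pairwise disjoint (ℓ ∩ m = 0 for distinct ℓ, m ∈ 𝓜), and every two not necessarily distinct elements of 𝓜 are opposite with respect to M₆ (ℓ ∩ m^⊥ = 0 for all ℓ,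 m ∈ 𝓜); i.e., 𝓜 is a perp-system of PG(5,3) with respect to the symplectic polarity of M₆. -/

import Mathlib

open Matrix

abbrev F3 := ZMod 3
abbrev V6 := Fin 6 → F3

/-- The line (2-dim subspace) represented by a 2×6 matrix: the span of its rows. -/
def lineOf (A : Matrix (Fin 2) (Fin 6) F3) : Submodule F3 V6 :=
  Submodule.span F3 (Set.range A)

/-- The perp of a subspace `W` with respect to a 6×6 Gram matrix `M`:
`{x | xᵀ M w = 0 for all w ∈ W}`. -/
def perp (M : Matrix (Fin 6) (Fin 6) F3) (W : Submodule F3 V6) : Submodule F3 V6 where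
  carrier := {x | ∀ w ∈ W, x ⬝ᵥ M.mulVec w = 0}
  add_mem' := by
    intro a b ha hb w hw
    simp only [Set.mem_setOf_eq] at *
    rw [add_dotProduct, ha w hw, hb w hw, add_zero]
  zero_mem' := by
    intro w hw
    exact zero_dotProduct _
  smul_mem' := by
    intro c x hx w hw
    simp only [Set.mem_setOf_eq] at *
    rw [smul_dotProduct, hx w hw, smul_zero]

/-- A 2×6 matrix built from three 2×2 blocks. -/
def blk3 (A B C : Matrix (Fin 2) (Fin 2) F3) : Matrix (Fin 2) (Fin 6) F3 :=
  Matrix.of fun i j => ![A, B, C] ⟨(j : ℕ) / 2, by omega⟩ i ⟨(j : ℕ) % 2, by omega⟩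

/-- A 6×6 matrix built from nine 2×2 blocks. -/
def blk33 (M : Matrix (Fin 3) (Fin 3) (Matrix (Fin 2) (Fin 2) F3)) :
    Matrix (Fin 6) (Fin 6) F3 :=
  Matrix.of fun i j =>
    M ⟨(i : ℕ) / 2, by omega⟩ ⟨(j : ℕ) / 2, by omega⟩ ⟨(i : ℕ) % 2, by omega⟩ ⟨(j : ℕ) % 2, by omega⟩

/-- The 2×2 block of a 6×6 matrix in block-position `(i, j)`. -/
def blkAt (M : Matrix (Fin 6) (Fin 6) F3) (i j : Fin 3) : Matrix (Fin 2) (Fin 2) F3 :=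
  Matrix.of fun a b => M ⟨2 * (i : ℕ) + (a : ℕ), by omega⟩ ⟨2 * (j : ℕ) + (b : ℕ), by omega⟩

/-- Two (not necessarily distinct) lines are opposite w.r.t. `M` if `ℓ ∩ m^⊥ = 0`. -/
def Opp (M : Matrix (Fin 6) (Fin 6) F3) (ℓ m : Submodule F3 V6) : Prop :=
  ℓ ⊓ perp M m = ⊥

/-- The six lines `m₁, …, m₆`. -/
def mline : Fin 6 → Submodule F3 V6 :=
  ![lineOf !![1, 0, 1, 2, 2, 0; 0, 1, 1, 0, 2, 2],
    lineOf !![1, 0, 1, 2, 1, 1; 0, 1, 1, 0, 2, 0],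
    lineOf !![1, 0, 0, 2, 0, 1; 0, 1, 1, 1, 2, 1],
    lineOf !![1, 0, 0, 2, 2, 0; 0, 1, 1, 1, 2, 2],
    lineOf !![1, 0, 2, 2, 1, 1; 0, 1, 0, 2, 2, 0],
    lineOf !![1, 0, 2, 2, 0, 1; 0, 1, 0, 2, 2, 1]]

/-- The Gram matrix `M₆`. -/
def M6 : Matrix (Fin 6) (Fin 6) F3 :=
  !![0, 0, 2, 2, 0, 0;
     0, 0, 0, 0, 1, 1;
     1, 0, 0, 0, 0, 0;
     1, 0, 0, 0, 1, 0;
     0, 2, 0, 2, 0, 0;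
     0, 2, 0, 0, 0, 0]

/-- The fifteen lines `F₁₅`. -/
def f15 : Fin 15 → Submodule F3 V6 :=
  ![lineOf !![1, 0, 2, 2, 2, 2; 0, 1, 0, 2, 0, 2],
    lineOf !![1, 0, 0, 0, 0, 1; 0, 1, 0, 0, 2, 1],
    lineOf !![1, 0, 1, 0, 2, 2; 0, 1, 0, 1, 0, 2],
    lineOf !![0, 0, 1, 0, 1, 2; 0, 0, 0, 1, 1, 0],
    lineOf !![1, 0, 0, 2, 1, 0; 0, 1, 1, 1, 0, 1],
    lineOf !![0, 0, 1, 0, 1, 1; 0, 0, 0, 1, 2, 0],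
    lineOf !![1, 0, 2, 0, 0, 0; 0, 1, 2, 2, 0, 0],
    lineOf !![1, 0, 1, 2, 0, 0; 0, 1, 1, 0, 0, 0],
    lineOf !![1, 0, 1, 0, 0, 0; 0, 1, 0, 1, 0, 0],
    lineOf !![1, 0, 2, 0, 2, 0; 0, 1, 2, 2, 2, 2],
    lineOf !![1, 0, 0, 0, 1, 0; 0, 1, 0, 0, 0, 1],
    lineOf !![0, 0, 1, 0, 1, 0; 0, 0, 0, 1, 0, 1],
    lineOf !![1, 0, 0, 0, 2, 2; 0, 1, 0, 0, 0, 2],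
    lineOf !![1, 0, 2, 0, 1, 0; 0, 1, 2, 2, 0, 1],
    lineOf !![1, 0, 1, 0, 1, 1; 0, 1, 0, 1, 2, 0]]

/-- Mathon's perp-system: the six lines `m₁, …, m₆` together with the fifteen lines
of `F₁₅`. -/
def MathonSet : Set (Submodule F3 V6) := Set.range mline ∪ Set.range f15

/-!
Each of the 21 lines is the row space of an explicit 2×6 matrix, so both properties become
finitely many linear conditions over GF(3): `lineOf A ∩ lineOf B = 0` says that no nonzero
combination `v A` of the rows of `A` is a combination `w B` of the rows of `B`, and
`lineOf A ∩ (lineOf B)^⊥ = 0` says that no nonzero `x = v A` is orthogonal to both rows of `B`.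
These conditions are checked by evaluation in the kernel. The count follows because pairwise
disjoint nonzero lines are distinct.
-/

section LinesAsRowSpaces

variable {M : Matrix (Fin 6) (Fin 6) F3} {A B : Matrix (Fin 2) (Fin 6) F3} {x : V6}

lemma mem_lineOf : x ∈ lineOf A ↔ ∃ v, v ᵥ* A = x := by
  change x ∈ Submodule.span F3 (Set.range A.row) ↔ _
  rw [← range_vecMulLinear, LinearMap.mem_range]
  rfl

lemma lineOf_ne_bot (hA : A ≠ 0) : lineOf A ≠ ⊥ := by
  rw [lineOf, Ne, Submodule.span_eq_bot]
  exact fun h => hA (Matrix.ext fun i j => congrFun (h _ ⟨i, rfl⟩) j)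

lemma mem_perp_lineOf : x ∈ perp M (lineOf B) ↔ B *ᵥ (x ᵥ* M) = 0 := by
  have pairing : ∀ v, x ⬝ᵥ M *ᵥ (v ᵥ* B) = (B *ᵥ (x ᵥ* M)) ⬝ᵥ v := fun v => by
    rw [dotProduct_mulVec, dotProduct_comm, ← dotProduct_mulVec, dotProduct_comm]
  show (∀ w ∈ lineOf B, x ⬝ᵥ M *ᵥ w = 0) ↔ _
  simp only [mem_lineOf, forall_exists_index, forall_apply_eq_imp_iff, pairing,
    dotProduct_eq_zero_iff]

lemma lineOf_inf_lineOf_eq_bot_iff :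
    lineOf A ⊓ lineOf B = ⊥ ↔ ∀ v w : Fin 2 → F3, v ᵥ* A = w ᵥ* B → v ᵥ* A = 0 := by
  simp only [eq_bot_iff, SetLike.le_def, Submodule.mem_inf, Submodule.mem_bot, mem_lineOf]
  constructor
  · intro h v w hvw
    exact h ⟨⟨v, rfl⟩, ⟨w, hvw.symm⟩⟩
  · rintro h x ⟨⟨v, rfl⟩, ⟨w, hw⟩⟩
    exact h v w hw.symm

lemma lineOf_inf_perp_lineOf_eq_bot_iff :
    lineOf A ⊓ perp M (lineOf B) = ⊥ ↔ ∀ v, B *ᵥ (v ᵥ* A ᵥ* M) = 0 → v ᵥ* A = 0 := by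
  simp only [eq_bot_iff, SetLike.le_def, Submodule.mem_inf, Submodule.mem_bot, mem_lineOf,
    mem_perp_lineOf]
  constructor
  · intro h v hv
    exact h ⟨⟨v, rfl⟩, hv⟩
  · rintro h x ⟨⟨v, rfl⟩, hv⟩
    exact h v hv

end LinesAsRowSpaces

lemma injective_of_pairwise_inf_eq_bot {ι α : Type*} [SemilatticeInf α] [OrderBot α]
    {f : ι → α} (hf : ∀ i, f i ≠ ⊥) (h : Pairwise fun i j => f i ⊓ f j = ⊥) : f.Injective :=
  fun i _ hij => by_contra fun hne => (disjoint_iff.2 (h hne)).ne (hf i) hij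

def mlineMatrix : Fin 6 → Matrix (Fin 2) (Fin 6) F3 :=
  ![!![1, 0, 1, 2, 2, 0; 0, 1, 1, 0, 2, 2],
    !![1, 0, 1, 2, 1, 1; 0, 1, 1, 0, 2, 0],
    !![1, 0, 0, 2, 0, 1; 0, 1, 1, 1, 2, 1],
    !![1, 0, 0, 2, 2, 0; 0, 1, 1, 1, 2, 2],
    !![1, 0, 2, 2, 1, 1; 0, 1, 0, 2, 2, 0],
    !![1, 0, 2, 2, 0, 1; 0, 1, 0, 2, 2, 1]]

def f15Matrix : Fin 15 → Matrix (Fin 2) (Fin 6) F3 :=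
  ![!![1, 0, 2, 2, 2, 2; 0, 1, 0, 2, 0, 2],
    !![1, 0, 0, 0, 0, 1; 0, 1, 0, 0, 2, 1],
    !![1, 0, 1, 0, 2, 2; 0, 1, 0, 1, 0, 2],
    !![0, 0, 1, 0, 1, 2; 0, 0, 0, 1, 1, 0],
    !![1, 0, 0, 2, 1, 0; 0, 1, 1, 1, 0, 1],
    !![0, 0, 1, 0, 1, 1; 0, 0, 0, 1, 2, 0],
    !![1, 0, 2, 0, 0, 0; 0, 1, 2, 2, 0, 0],
    !![1, 0, 1, 2, 0, 0; 0, 1, 1, 0, 0, 0],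
    !![1, 0, 1, 0, 0, 0; 0, 1, 0, 1, 0, 0],
    !![1, 0, 2, 0, 2, 0; 0, 1, 2, 2, 2, 2],
    !![1, 0, 0, 0, 1, 0; 0, 1, 0, 0, 0, 1],
    !![0, 0, 1, 0, 1, 0; 0, 0, 0, 1, 0, 1],
    !![1, 0, 0, 0, 2, 2; 0, 1, 0, 0, 0, 2],
    !![1, 0, 2, 0, 1, 0; 0, 1, 2, 2, 0, 1],
    !![1, 0, 1, 0, 1, 1; 0, 1, 0, 1, 2, 0]]

def mathonMatrix : Fin 6 ⊕ Fin 15 → Matrix (Fin 2) (Fin 6) F3 := Sum.elim mlineMatrix f15Matrix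

lemma mathonSet_eq_range : MathonSet = Set.range fun i => lineOf (mathonMatrix i) := by
  rw [MathonSet, ← Set.Sum.elim_range]
  congr 1
  funext i
  rcases i with i | i <;> fin_cases i <;> rfl

lemma mathonMatrix_ne_zero : ∀ i, mathonMatrix i ≠ 0 := by
  decide

lemma mathonMatrix_rowSpaces_disjoint : ∀ i j, i ≠ j → ∀ v w : Fin 2 → F3,
    v ᵥ* mathonMatrix i = w ᵥ* mathonMatrix j → v ᵥ* mathonMatrix i = 0 := by
  decide +kernel

lemma mathonMatrix_rowSpaces_opposite : ∀ i j, ∀ v : Fin 2 → F3,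
    mathonMatrix j *ᵥ (v ᵥ* mathonMatrix i ᵥ* M6) = 0 → v ᵥ* mathonMatrix i = 0 := by
  decide +kernel

/-- The set `𝓜` has exactly 21 elements, its elements are pairwise
disjoint, and every two not necessarily distinct elements of `𝓜` are opposite with
respect to `M₆`; i.e. `𝓜` is a perp-system of `PG(5,3)` for the symplectic polarity
of `M₆`. -/
theorem stmt15 :
    MathonSet.ncard = 21 ∧
    (∀ ℓ ∈ MathonSet, ∀ m ∈ MathonSet, ℓ ≠ m → ℓ ⊓ m = ⊥) ∧
    (∀ ℓ ∈ MathonSet, ∀ m ∈ MathonSet, ℓ ⊓ perp M6 m = ⊥) := by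
  have hdisj : Pairwise fun i j => lineOf (mathonMatrix i) ⊓ lineOf (mathonMatrix j) = ⊥ :=
    fun i j hij => lineOf_inf_lineOf_eq_bot_iff.2 (mathonMatrix_rowSpaces_disjoint i j hij)
  have hinj : Function.Injective fun i => lineOf (mathonMatrix i) :=
    injective_of_pairwise_inf_eq_bot (fun i => lineOf_ne_bot (mathonMatrix_ne_zero i)) hdisj
  rw [mathonSet_eq_range]
  refine ⟨?_, ?_, ?_⟩
  · rw [Set.ncard_range_of_injective hinj, Nat.card_eq_fintype_card]
    rfl
  · rintro _ ⟨i, rfl⟩ _ ⟨j, rfl⟩ hne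
    exact hdisj fun hij => hne (by rw [hij])
  · rintro _ ⟨i, rfl⟩ _ ⟨j, rfl⟩
    exact lineOf_inf_perp_lineOf_eq_bot_iff.2 (mathonMatrix_rowSpaces_opposite i j)
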